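/- Let N be a near hexagon of order (2,2) with v points in total. Then for every point x of N, the number of quads of N containing x equals (63 − v)/12; in particular, 12 divides 63 − v. -/

import Mathlib

/-- The collinearity graph of a point-line geometry whose lines are given as
sets of points: two points are adjacent when they are distinct and lie on a
common line. -/
def collGraph {P : Type*} (Lines : Set (Set P)) : SimpleGraph P where
  Adj x y := x ≠ y ∧ ∃ L ∈ Lines, x ∈ L ∧ y ∈ L
  symm := by
    constructor
    rintro x y ⟨hxy, L, hL, hx, hy⟩
    exact ⟨hxy.symm, L, hL, hy, hx⟩
  loopless := by
    constructor
    rintro x ⟨h, -⟩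
    exact h rfl

/-- A near `2d`-gon: a partial linear space (every line carries at least two
points, two distinct points lie on at most one common line) whose collinearity
graph is connected of diameter `d`, and in which for every point `x` and every
line `L` there is a unique point of `L` nearest to `x`.  A near hexagon is a
`NearPolygon P 3`, a near octagon is a `NearPolygon P 4`. -/
structure NearPolygon (P : Type*) (d : ℕ) where
  Lines : Set (Set P)
  two_pts : ∀ L ∈ Lines, ∃ x ∈ L, ∃ y ∈ L, x ≠ y
  unique_line : ∀ L₁ ∈ Lines, ∀ L₂ ∈ Lines, ∀ x y : P,
    x ≠ y → x ∈ L₁ → y ∈ L₁ → x ∈ L₂ → y ∈ L₂ → L₁ = L₂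
  connected : (collGraph Lines).Connected
  diam_le : ∀ x y : P, (collGraph Lines).dist x y ≤ d
  diam_eq : ∃ x y : P, (collGraph Lines).dist x y = d
  near : ∀ (x : P), ∀ L ∈ Lines, ∃! y, y ∈ L ∧
    ∀ z ∈ L, (collGraph Lines).dist x y ≤ (collGraph Lines).dist x z

/-- A near polygon has order `(s,t)` if every line is incident with exactly
`s+1` points and every point is incident with exactly `t+1` lines. -/
def NearPolygon.hasOrder {P : Type*} {d : ℕ} (N : NearPolygon P d) (s t : ℕ) : Prop :=
  (∀ L ∈ N.Lines, L.ncard = s + 1) ∧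
  (∀ x : P, {L | L ∈ N.Lines ∧ x ∈ L}.ncard = t + 1)

/-- A semi-valuation: every line `L` contains a unique point `xL` such that
every other point of `L` has value `f xL + 1`. -/
def IsSemiValuation {P : Type*} (Lines : Set (Set P)) (f : P → ℤ) : Prop :=
  ∀ L ∈ Lines, ∃! xL, xL ∈ L ∧ ∀ x ∈ L, x ≠ xL → f x = f xL + 1

/-- A valuation: a semi-valuation whose minimum value is `0`. -/
def IsValuation {P : Type*} (Lines : Set (Set P)) (f : P → ℤ) : Prop :=
  IsSemiValuation Lines f ∧ (∀ x, 0 ≤ f x) ∧ (∃ x, f x = 0)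

/-- `ι` realizes the geometry with lines `LQ` as a full isometrically embedded
subgeometry of the geometry with lines `LP` (lines being identified with their
point sets, fullness amounts to lines mapping onto lines). -/
structure IsFullIsomEmb {Q P : Type*} (LQ : Set (Set Q)) (LP : Set (Set P))
    (ι : Q → P) : Prop where
  inj : Function.Injective ι
  line_map : ∀ L ∈ LQ, ι '' L ∈ LP
  isometric : ∀ x y : Q, (collGraph LP).dist (ι x) (ι y) = (collGraph LQ).dist x y

/-- The distance `d(x, P)` from a point `x` of the ambient geometry to the
point set of the embedded subgeometry. -/
noncomputable def distToSub {Q P : Type*} (LP : Set (Set P)) (ι : Q → P) (x : P) : ℕ :=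
  sInf (Set.range fun z : Q => (collGraph LP).dist x (ι z))

/-- The function `f_x : y ↦ d(x, y) - d(x, P)` induced on the embedded
subgeometry by a point `x` of the ambient geometry. -/
noncomputable def inducedVal {Q P : Type*} (LP : Set (Set P)) (ι : Q → P) (x : P) :
    Q → ℤ :=
  fun y => ((collGraph LP).dist x (ι y) : ℤ) - (distToSub LP ι x : ℤ)

/-- Two valuations are neighboring if `|f1 x - f2 x + ε| ≤ 1` for all `x`,
for some integer `ε`. -/
def Neighboring {P : Type*} (f1 f2 : P → ℤ) : Prop :=
  ∃ ε : ℤ, ∀ x, |f1 x - f2 x + ε| ≤ 1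

/-- The semi-valuation `f3'` built from two neighboring valuations `f1, f2`
and a compatible `ε`. -/
def starFun {P : Type*} (f1 f2 : P → ℤ) (ε : ℤ) (x : P) : ℤ :=
  if f1 x = f2 x - ε then f1 x - 1 else max (f1 x) (f2 x - ε)

/-- `StarRel f1 f2 f3` expresses `f1 * f2 = f3`: some `ε ∈ {-1,0,1}` witnesses
that `f1` and `f2` are neighboring, and, for every such `ε`, subtracting the
minimum value `m` of `f3' = starFun f1 f2 ε` from `f3'` yields `f3`. -/
def StarRel {P : Type*} (f1 f2 f3 : P → ℤ) : Prop :=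
  (∃ ε ∈ ({-1, 0, 1} : Set ℤ), ∀ x, |f1 x - f2 x + ε| ≤ 1) ∧
  ∀ ε ∈ ({-1, 0, 1} : Set ℤ), (∀ x, |f1 x - f2 x + ε| ≤ 1) →
    ∃ m : ℤ, IsLeast (Set.range (starFun f1 f2 ε)) m ∧
      ∀ x, f3 x = starFun f1 f2 ε x - m

/-- A subspace: together with two distinct collinear points it contains every
line through them. -/
def IsSubspace {P : Type*} (Lines : Set (Set P)) (X : Set P) : Prop :=
  ∀ L ∈ Lines, ∀ x ∈ L, ∀ y ∈ L, x ≠ y → x ∈ X → y ∈ X → L ⊆ X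

/-- A convex subspace: a subspace containing every point on a shortest path
between any two of its points. -/
def IsConvexSubspace {P : Type*} (Lines : Set (Set P)) (X : Set P) : Prop :=
  IsSubspace Lines X ∧
  ∀ x ∈ X, ∀ y ∈ X, ∀ z : P,
    (collGraph Lines).dist x z + (collGraph Lines).dist z y
      = (collGraph Lines).dist x y → z ∈ X

/-- A quad: a convex subspace of diameter `2` inducing (with the lines fully
contained in it) a nondegenerate generalized quadrangle. -/
def IsQuad {P : Type*} (Lines : Set (Set P)) (Q : Set P) : Prop :=
  IsConvexSubspace Lines Q ∧
  (∀ x ∈ Q, ∀ y ∈ Q, (collGraph Lines).dist x y ≤ 2) ∧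
  (∃ x ∈ Q, ∃ y ∈ Q, (collGraph Lines).dist x y = 2) ∧
  (∀ x ∈ Q, ∀ L ∈ Lines, L ⊆ Q → x ∉ L →
    ∃! y, y ∈ L ∧ (collGraph Lines).Adj x y) ∧
  (∀ x ∈ Q, ∃ L₁ ∈ Lines, ∃ L₂ ∈ Lines,
    L₁ ⊆ Q ∧ L₂ ⊆ Q ∧ x ∈ L₁ ∧ x ∈ L₂ ∧ L₁ ≠ L₂) ∧
  (∃ x ∈ Q, ∃ y ∈ Q, x ≠ y ∧ ¬ (collGraph Lines).Adj x y)

/-- A quad has order `(s,t')` if each of its lines has `s+1` points and each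
of its points is on exactly `t'+1` lines contained in the quad. -/
def QuadHasOrder {P : Type*} (Lines : Set (Set P)) (Q : Set P) (s t' : ℕ) : Prop :=
  (∀ L ∈ Lines, L ⊆ Q → L.ncard = s + 1) ∧
  (∀ x ∈ Q, {L | L ∈ Lines ∧ L ⊆ Q ∧ x ∈ L}.ncard = t' + 1)

/-!
Fix a point `x` and let `nᵢ` be the number of points at distance `i` from `x`. Every line has a
unique point nearest to `x`, so double counting the incidences between lines and the spheres
around `x` gives `n₁ = 6` and `v = 3 n₂ - 9`.

A point `z` at distance `2` from `x` lies on one or two of the `12` lines at distance `1` from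
`x`: were all three lines through `z` to meet the neighbourhood of `x`, this would spread along
the edges of the collinearity graph and force diameter `2`. Two such lines span a `3 × 3` grid,
which is the only quad through `x` and `z`; conversely every quad through `x` is such a grid and
contains four points at distance `2` from `x`. Counting incidences between these points and those
lines gives `n₂ + 4 q = 24`, where `q` is the number of quads through `x`; so `v = 63 - 12 q`.
-/

theorem SimpleGraph.Reachable.mem_of_adj_closed {V : Type*} {G : SimpleGraph V} {S : Set V}
    (hS : ∀ v w, G.Adj v w → v ∈ S → w ∈ S) {u v : V} (huv : G.Reachable u v) (hu : u ∈ S) :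
    v ∈ S := by
  obtain ⟨walk⟩ := huv
  induction walk with
  | nil => exact hu
  | cons hadj _ ih => exact ih (hS _ _ hadj hu)

theorem injective_vec_three {α : Type*} {a b c : α} (hab : a ≠ b) (hac : a ≠ c) (hbc : b ≠ c) :
    Function.Injective ![a, b, c] := by
  intro i j hij
  fin_cases i <;> fin_cases j <;> simp_all [eq_comm]

namespace Set

theorem sum_ncard_above_eq_sum_ncard_below {α β : Type*} (r : α → β → Prop) {s : Set α}
    {t : Set β} (hs : s.Finite) (ht : t.Finite) :
    ∑ a ∈ hs.toFinset, {b | b ∈ t ∧ r a b}.ncard =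
      ∑ b ∈ ht.toFinset, {a | a ∈ s ∧ r a b}.ncard := by
  classical
  convert Finset.sum_card_bipartiteAbove_eq_sum_card_bipartiteBelow r using 2 with a - b -
  all_goals rw [← Set.ncard_coe_finset]; congr 1; ext; simp

theorem ncard_mul_eq_ncard_mul {α β : Type*} (r : α → β → Prop) {s : Set α} {t : Set β}
    (hs : s.Finite) (ht : t.Finite) {m n : ℕ} (hm : ∀ a ∈ s, {b | b ∈ t ∧ r a b}.ncard = m)
    (hn : ∀ b ∈ t, {a | a ∈ s ∧ r a b}.ncard = n) : s.ncard * m = t.ncard * n := by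
  have h := sum_ncard_above_eq_sum_ncard_below r hs ht
  rwa [Finset.sum_const_nat fun a ha => hm a (hs.mem_toFinset.1 ha),
    Finset.sum_const_nat fun b hb => hn b (ht.mem_toFinset.1 hb),
    ← Set.ncard_eq_toFinset_card s hs, ← Set.ncard_eq_toFinset_card t ht] at h

theorem sum_ite_one_zero_eq_ncard {α : Type*} {s : Set α} (hs : s.Finite) (p : α → Prop)
    [DecidablePred p] : ∑ a ∈ hs.toFinset, (if p a then 1 else 0) = {a | a ∈ s ∧ p a}.ncard := by
  rw [Finset.sum_boole, Nat.cast_id, ← Set.ncard_coe_finset, Finset.coe_filter]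
  simp

end Set

namespace NearPolygon

variable {P : Type*}

abbrev graph {d : ℕ} (N : NearPolygon P d) : SimpleGraph P := collGraph N.Lines

section Geometry

variable {d : ℕ} {N : NearPolygon P d} {L M : Set P} {e p q u v w z : P}

theorem adj_of_mem (hL : L ∈ N.Lines) (hu : u ∈ L) (hv : v ∈ L) (huv : u ≠ v) :
    N.graph.Adj u v :=
  ⟨huv, L, hL, hu, hv⟩

theorem dist_eq_zero_iff : N.graph.dist u v = 0 ↔ u = v :=
  (N.connected u v).dist_eq_zero_iff

theorem dist_triangle : N.graph.dist u w ≤ N.graph.dist u v + N.graph.dist v w :=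
  N.connected.dist_triangle

theorem dist_le_succ_of_adj (h : N.graph.Adj v w) :
    N.graph.dist u w ≤ N.graph.dist u v + 1 := by
  have := dist_triangle (N := N) (u := u) (v := v) (w := w)
  rwa [SimpleGraph.dist_eq_one_iff_adj.2 h] at this

theorem dist_le_one_of_mem (hL : L ∈ N.Lines) (hu : u ∈ L) (hv : v ∈ L) :
    N.graph.dist u v ≤ 1 := by
  rcases eq_or_ne u v with rfl | huv
  · rw [dist_eq_zero_iff.2 rfl]; omega
  · rw [SimpleGraph.dist_eq_one_iff_adj.2 (adj_of_mem hL hu hv huv)]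

theorem dist_le_two_of_adj_of_adj (huv : N.graph.Adj u v) (hvw : N.graph.Adj v w) :
    N.graph.dist u w ≤ 2 := by
  have := dist_le_succ_of_adj (u := u) hvw
  rwa [SimpleGraph.dist_eq_one_iff_adj.2 huv] at this

theorem dist_eq_two_of_not_adj (huw : u ≠ w) (hnadj : ¬ N.graph.Adj u w)
    (hle : N.graph.dist u w ≤ 2) : N.graph.dist u w = 2 := by
  have h0 : N.graph.dist u w ≠ 0 := fun h => huw (dist_eq_zero_iff.1 h)
  have h1 : N.graph.dist u w ≠ 1 := fun h => hnadj (SimpleGraph.dist_eq_one_iff_adj.1 h)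
  omega

theorem ne_of_dist_eq_two (h : N.graph.dist p q = 2) : p ≠ q := by
  rintro rfl
  rw [dist_eq_zero_iff.2 rfl] at h
  omega

theorem not_adj_of_dist_eq_two (h : N.graph.dist p q = 2) : ¬ N.graph.Adj p q := by
  intro hpq
  rw [SimpleGraph.dist_eq_one_iff_adj.2 hpq] at h
  omega

theorem not_mem_of_mem_of_dist_eq_two (hL : L ∈ N.Lines) (hqL : q ∈ L)
    (h : N.graph.dist p q = 2) : p ∉ L := fun hpL =>
  not_adj_of_dist_eq_two h (adj_of_mem hL hpL hqL (ne_of_dist_eq_two h))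

theorem exists_adj_of_dist_eq_succ {n : ℕ} (h : N.graph.dist u w = n + 1) :
    ∃ v, N.graph.Adj v w ∧ N.graph.dist u v = n := by
  obtain ⟨walk, hwalk⟩ := (N.connected w u).exists_walk_length_eq_dist
  rw [SimpleGraph.dist_comm, h] at hwalk
  cases walk with
  | nil => simp at hwalk
  | cons hadj rest =>
    refine ⟨_, hadj.symm, le_antisymm ?_ ?_⟩
    · simpa [SimpleGraph.dist_comm, show rest.length = n by simpa using hwalk] using
        SimpleGraph.dist_le rest
    · have := dist_le_succ_of_adj (u := u) hadj.symm
      omega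

theorem inter_subsingleton_of_ne (hL : L ∈ N.Lines) (hM : M ∈ N.Lines) (hLM : L ≠ M) :
    (L ∩ M).Subsingleton := fun u ⟨huL, huM⟩ v ⟨hvL, hvM⟩ =>
  by_contra fun huv => hLM (N.unique_line L hL M hM u v huv huL hvL huM hvM)

theorem exists_mem_ne (hL : L ∈ N.Lines) (p : P) : ∃ q ∈ L, q ≠ p := by
  obtain ⟨a, haL, b, hbL, hab⟩ := N.two_pts L hL
  rcases eq_or_ne a p with rfl | hap
  exacts [⟨b, hbL, hab.symm⟩, ⟨a, haL, hap⟩]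

theorem exists_nearest (p : P) (hL : L ∈ N.Lines) :
    ∃ n ∈ L, ∀ z ∈ L, z ≠ n → N.graph.dist p z = N.graph.dist p n + 1 := by
  obtain ⟨n, ⟨hnL, hmin⟩, huniq⟩ := N.near p L hL
  refine ⟨n, hnL, fun z hz hzn => ?_⟩
  have h1 : N.graph.dist p n ≤ N.graph.dist p z := hmin z hz
  have h2 := dist_le_succ_of_adj (u := p) (adj_of_mem hL hnL hz (Ne.symm hzn))
  have h3 : N.graph.dist p z ≠ N.graph.dist p n :=
    fun he => hzn (huniq z ⟨hz, fun w hw => he ▸ hmin w hw⟩)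
  omega

theorem mem_of_adj_of_adj (hL : L ∈ N.Lines) (hu : u ∈ L) (hv : v ∈ L) (huv : u ≠ v)
    (hpu : N.graph.Adj p u) (hpv : N.graph.Adj p v) : p ∈ L := by
  by_contra hpL
  obtain ⟨n, hnL, hn⟩ := exists_nearest p hL
  have hn0 : N.graph.dist p n ≠ 0 := fun h => hpL (dist_eq_zero_iff.1 h ▸ hnL)
  have hu1 := SimpleGraph.dist_eq_one_iff_adj.2 hpu
  have hv1 := SimpleGraph.dist_eq_one_iff_adj.2 hpv
  rcases eq_or_ne u n with rfl | hun
  · have := hn v hv huv.symm; omega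
  · have := hn u hu hun; omega

theorem dist_eq_two_of_mem_of_mem (hL : L ∈ N.Lines) (hM : M ∈ N.Lines) (hLM : L ≠ M)
    (hpL : p ∈ L) (hpM : p ∈ M) (huL : u ∈ L) (hvM : v ∈ M) (hup : u ≠ p) (hvp : v ≠ p) :
    N.graph.dist u v = 2 := by
  have hpu := adj_of_mem hL hpL huL hup.symm
  have hpv := adj_of_mem hM hpM hvM hvp.symm
  refine dist_eq_two_of_not_adj (fun huv => hup ?_) (fun ⟨huv, K, hK, huK, hvK⟩ => ?_)
    (dist_le_two_of_adj_of_adj hpu.symm hpv)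
  · exact inter_subsingleton_of_ne hL hM hLM ⟨huL, huv ▸ hvM⟩ ⟨hpL, hpM⟩
  · have hpK := mem_of_adj_of_adj hK huK hvK huv hpu hpv
    exact hLM ((N.unique_line K hK L hL p u hup.symm hpK huK hpL huL).symm.trans
      (N.unique_line K hK M hM p v hvp.symm hpK hvK hpM hvM))

theorem exists_mem_dist_eq_of_dist_eq {k : ℕ} (hL : L ∈ N.Lines) (hu : u ∈ L) (hv : v ∈ L)
    (huv : u ≠ v) (hpu : N.graph.dist p u = k + 1) (hpv : N.graph.dist p v = k + 1) :
    ∃ w ∈ L, N.graph.dist p w = k := by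
  obtain ⟨n, hnL, hn⟩ := exists_nearest p hL
  refine ⟨n, hnL, ?_⟩
  rcases eq_or_ne u n with rfl | hun
  · have := hn v hv huv.symm; omega
  · have := hn u hu hun; omega

theorem dist_eq_two_of_adj_of_mem (hL : L ∈ N.Lines) (hpL : p ∉ L) (heL : e ∈ L)
    (hpe : N.graph.Adj p e) (hzL : z ∈ L) (hze : z ≠ e) : N.graph.dist p z = 2 := by
  obtain ⟨n, hnL, hn⟩ := exists_nearest p hL
  have hn0 : N.graph.dist p n ≠ 0 := fun h => hpL (dist_eq_zero_iff.1 h ▸ hnL)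
  have he1 := SimpleGraph.dist_eq_one_iff_adj.2 hpe
  rcases eq_or_ne e n with rfl | hen
  · rw [hn z hzL hze, he1]
  · have := hn e heL hen; omega

theorem eq_of_mem_of_ne (hL3 : L.ncard = 3) (hu : u ∈ L) (hv : v ∈ L) (hw : w ∈ L)
    (huv : u ≠ v) (huw : u ≠ w) (hvw : v ≠ w) (hz : z ∈ L) (hzu : z ≠ u) (hzv : z ≠ v) :
    z = w := by
  have hL : L = {u, v, w} := (Set.eq_of_subset_of_ncard_le
    (by rintro _ (rfl | rfl | rfl) <;> assumption)
    (by rw [hL3, Set.ncard_eq_three.2 ⟨u, v, w, huv, huw, hvw, rfl⟩])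
    (Set.finite_of_ncard_ne_zero (by omega))).symm
  rw [hL] at hz
  simpa [hzu, hzv] using hz

theorem exists_third (hL3 : L.ncard = 3) (u v : P) : ∃ w ∈ L, w ≠ u ∧ w ≠ v := by
  by_contra! h
  have hsub : L ⊆ {u, v} := fun z hz => by
    by_cases hzu : z = u
    · exact Or.inl hzu
    · exact Or.inr (h z hz hzu)
  have := Set.ncard_le_ncard hsub (Set.toFinite _)
  have := Set.ncard_insert_le u {v}
  rw [Set.ncard_singleton] at this
  omega

theorem range_eq_of_injective (hL3 : L.ncard = 3) {f : Fin 3 → P} (hf : Function.Injective f)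
    (hfL : ∀ i, f i ∈ L) : Set.range f = L :=
  Set.eq_of_subset_of_ncard_le (Set.range_subset_iff.2 hfL)
    (by rw [hL3, Set.ncard_range_of_injective hf, Nat.card_eq_fintype_card, Fintype.card_fin])
    (Set.finite_of_ncard_ne_zero (by omega))

theorem adj_of_dist_eq_two (hL : L ∈ N.Lines) (hL3 : L.ncard = 3) (hu : u ∈ L) (hv : v ∈ L)
    (hw : w ∈ L) (huv : u ≠ v) (huw : u ≠ w) (hvw : v ≠ w) (hpu : N.graph.dist p u = 2)
    (hpv : N.graph.dist p v = 2) : N.graph.Adj p w := by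
  obtain ⟨y, hyL, hy⟩ := exists_mem_dist_eq_of_dist_eq hL hu hv huv hpu hpv
  have hyw : y = w := eq_of_mem_of_ne hL3 hu hv hw huv huw hvw hyL
    (by rintro rfl; omega) (by rintro rfl; omega)
  exact SimpleGraph.dist_eq_one_iff_adj.1 (hyw ▸ hy)

theorem finite_of_hasOrder {s t : ℕ} (hord : N.hasOrder s t) : Finite P := by
  obtain ⟨x, -⟩ := N.diam_eq
  have hball : ∀ n, {w | N.graph.dist x w ≤ n}.Finite := by
    intro n
    induction n with
    | zero => exact (Set.finite_singleton x).subset fun w hw =>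
        (dist_eq_zero_iff.1 (Nat.le_zero.1 hw)).symm
    | succ n ih =>
      refine ((ih.biUnion fun z _ => (Set.finite_of_ncard_ne_zero (s := {L | L ∈ N.Lines ∧ z ∈ L})
        (by rw [hord.2 z]; omega)).biUnion fun L hL => Set.finite_of_ncard_ne_zero
          (by rw [hord.1 L hL.1]; omega)).union ih).subset fun w (hw : _ ≤ n + 1) => ?_
      rcases Nat.lt_or_ge (N.graph.dist x w) (n + 1) with h | h
      · exact Or.inr (Nat.lt_succ_iff.1 h)
      · obtain ⟨z, ⟨-, L, hL, hzL, hwL⟩, hz⟩ := exists_adj_of_dist_eq_succ (le_antisymm hw h)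
        exact Or.inl (Set.mem_biUnion (show z ∈ {w | N.graph.dist x w ≤ n} from hz.le)
          (Set.mem_biUnion (show L ∈ {L | L ∈ N.Lines ∧ z ∈ L} from ⟨hL, hzL⟩) hwL))
  exact Set.finite_univ_iff.1 ((hball d).subset fun w _ => N.diam_le x w)

end Geometry

section FullPairs

variable {d : ℕ} {N : NearPolygon P d} {p q r x y z : P}

variable (N) in
/-- The configuration of two opposite points of a quad of maximal order `(s, t)` in a near
polygon of order `(s, t)`. -/
def IsFullPair (p q : P) : Prop :=
  N.graph.dist p q = 2 ∧ ∀ L ∈ N.Lines, p ∈ L → ∃ e ∈ L, N.graph.Adj e q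

variable (N) in
def nbrLines (p q : P) : Set (Set P) :=
  {L | L ∈ N.Lines ∧ p ∈ L ∧ ∃ e ∈ L, N.graph.Adj e q}

theorem finite_nbrLines {s t : ℕ} (hord : N.hasOrder s t) (p q : P) :
    (N.nbrLines p q).Finite :=
  (Set.finite_of_ncard_ne_zero (s := {L | L ∈ N.Lines ∧ p ∈ L}) (by rw [hord.2 p]; omega)).subset
    fun _ hL => ⟨hL.1, hL.2.1⟩

theorem one_le_ncard_nbrLines {s t : ℕ} (hord : N.hasOrder s t) (h : N.graph.dist x z = 2) :
    1 ≤ (N.nbrLines z x).ncard := by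
  obtain ⟨e, ⟨-, L, hL, heL, hzL⟩, hxe⟩ := exists_adj_of_dist_eq_succ (show _ = 1 + 1 from h)
  exact (Set.ncard_pos (finite_nbrLines hord z x)).2
    ⟨L, hL, hzL, e, heL, (SimpleGraph.dist_eq_one_iff_adj.1 hxe).symm⟩

/-- The common neighbours that `p` sees on its lines determine distinct lines through `q`;
as `p` and `q` are on equally many lines, these are all the lines through `q`. -/
theorem IsFullPair.symm {t : ℕ} (ht : ∀ p, {L | L ∈ N.Lines ∧ p ∈ L}.ncard = t + 1)
    (h : N.IsFullPair p q) : N.IsFullPair q p := by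
  obtain ⟨hpq, hlines⟩ := h
  refine ⟨by rwa [SimpleGraph.dist_comm], ?_⟩
  have : Nonempty P := ⟨p⟩
  choose! e heL heq using hlines
  have hep : ∀ L ∈ N.Lines, p ∈ L → N.graph.Adj p (e L) := fun L hL hpL =>
    adj_of_mem hL hpL (heL L hL hpL) fun hpe => not_adj_of_dist_eq_two hpq (hpe ▸ heq L hL hpL)
  have hline : ∀ L ∈ N.Lines, p ∈ L → ∃ M ∈ N.Lines, q ∈ M ∧ e L ∈ M := fun L hL hpL =>
    let ⟨_, M, hM, heM, hqM⟩ := heq L hL hpL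
    ⟨M, hM, hqM, heM⟩
  choose! f hf hqf hef using hline
  have hinj : Set.InjOn f {L | L ∈ N.Lines ∧ p ∈ L} := by
    rintro L ⟨hL, hpL⟩ L' ⟨hL', hpL'⟩ hff
    by_cases hee : e L = e L'
    · exact N.unique_line L hL L' hL' p (e L) (hep L hL hpL).ne hpL (heL L hL hpL) hpL'
        (hee ▸ heL L' hL' hpL')
    · have hpf : p ∈ f L := mem_of_adj_of_adj (hf L hL hpL) (hef L hL hpL)
        (hff ▸ hef L' hL' hpL') hee (hep L hL hpL) (hep L' hL' hpL')
      exact absurd hpf (not_mem_of_mem_of_dist_eq_two (hf L hL hpL) (hqf L hL hpL) hpq)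
  have himage : f '' {L | L ∈ N.Lines ∧ p ∈ L} = {M | M ∈ N.Lines ∧ q ∈ M} :=
    Set.eq_of_subset_of_ncard_le
      (by rintro _ ⟨L, ⟨hL, hpL⟩, rfl⟩; exact ⟨hf L hL hpL, hqf L hL hpL⟩)
      (by rw [hinj.ncard_image, ht, ht])
      (Set.finite_of_ncard_ne_zero (by rw [ht]; omega))
  intro M hM hqM
  obtain ⟨L, ⟨hL, hpL⟩, rfl⟩ : M ∈ f '' {L | L ∈ N.Lines ∧ p ∈ L} := himage ▸ ⟨hM, hqM⟩
  exact ⟨e L, hef L hL hpL, (hep L hL hpL).symm⟩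

theorem IsFullPair.of_adj_right (h : N.IsFullPair p q) (hqr : N.graph.Adj q r)
    (hpr : N.graph.dist p r = 2) : N.IsFullPair p r := by
  refine ⟨hpr, fun L hL hpL => ?_⟩
  obtain ⟨e, heL, heq⟩ := h.2 L hL hpL
  by_cases her : N.graph.Adj e r
  · exact ⟨e, heL, her⟩
  have hep : e ≠ p := by rintro rfl; exact not_adj_of_dist_eq_two h.1 heq
  have hre : N.graph.dist r e = 2 := dist_eq_two_of_not_adj
    (by rintro rfl; exact not_adj_of_dist_eq_two hpr (adj_of_mem hL hpL heL hep.symm))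
    (fun hre => her hre.symm) (dist_le_two_of_adj_of_adj hqr.symm heq.symm)
  obtain ⟨w, hwL, hw⟩ := exists_mem_dist_eq_of_dist_eq (p := r) hL hpL heL hep.symm
    (by rw [SimpleGraph.dist_comm]; exact hpr) hre
  exact ⟨w, hwL, (SimpleGraph.dist_eq_one_iff_adj.1 hw).symm⟩

/-- Either `a = q`, or `q` is adjacent to `r` and `a` is a point on another line through `q`. -/
theorem IsFullPair.exists_dist_eq_two (hord : N.hasOrder 2 2) (h : N.IsFullPair p q)
    (hpr : N.graph.Adj p r) : ∃ a, N.IsFullPair p a ∧ N.graph.dist a r = 2 := by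
  obtain ⟨hpr_ne, K, hK, hpK, hrK⟩ := hpr
  have hqr : N.graph.dist q r ≤ 2 := by
    obtain ⟨e, heK, heq⟩ := h.2 K hK hpK
    by_cases her : e = r
    · rw [SimpleGraph.dist_eq_one_iff_adj.2 (her ▸ heq).symm]; omega
    · exact dist_le_two_of_adj_of_adj heq.symm (adj_of_mem hK heK hrK her)
  by_cases hqr2 : N.graph.dist q r = 2
  · exact ⟨q, h, hqr2⟩
  obtain ⟨hqr_ne, K', hK', hqK', hrK'⟩ : N.graph.Adj q r := by
    refine SimpleGraph.dist_eq_one_iff_adj.1 ?_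
    have : N.graph.dist q r ≠ 0 := fun h0 => not_adj_of_dist_eq_two h.1
      (dist_eq_zero_iff.1 h0 ▸ ⟨hpr_ne, K, hK, hpK, hrK⟩)
    omega
  obtain ⟨M, ⟨hM, hqM⟩, hMK'⟩ :=
    Set.exists_ne_of_one_lt_ncard (by rw [hord.2 q]; omega) K'
  obtain ⟨e, heM, hep⟩ := (h.symm hord.2).2 M hM hqM
  obtain ⟨a, haM, haq, hae⟩ := exists_third (hord.1 M hM) q e
  have hpa : N.graph.dist p a = 2 := dist_eq_two_of_adj_of_mem hM
    (not_mem_of_mem_of_dist_eq_two hM hqM h.1) heM hep.symm haM hae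
  exact ⟨a, h.of_adj_right (adj_of_mem hM hqM haM haq.symm) hpa,
    dist_eq_two_of_mem_of_mem hM hK' hMK' hqM hqK' haM hrK' haq hqr_ne.symm⟩

/-- Pick a common neighbour `r` of `p` and `y`, and `a` as in `exists_dist_eq_two`: the line
`r y` carries a neighbour of `a`, which is a full partner of `p` adjacent or equal to `y`. -/
theorem IsFullPair.of_dist_eq_two (hord : N.hasOrder 2 2) (h : N.IsFullPair p q)
    (hpy : N.graph.dist p y = 2) : N.IsFullPair p y := by
  obtain ⟨r, hry, hpr⟩ := exists_adj_of_dist_eq_succ (show N.graph.dist p y = 1 + 1 from hpy)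
  have hpr : N.graph.Adj p r := SimpleGraph.dist_eq_one_iff_adj.1 hpr
  obtain ⟨a, ha, har⟩ := h.exists_dist_eq_two hord hpr
  have har' : N.IsFullPair r a := ((ha.symm hord.2).of_adj_right hpr har).symm hord.2
  obtain ⟨-, K, hK, hrK, hyK⟩ := hry
  obtain ⟨m, hmK, hma⟩ := har'.2 K hK hrK
  have hmr : m ≠ r := by
    rintro rfl
    exact not_adj_of_dist_eq_two har hma.symm
  have hm : N.IsFullPair p m := ha.of_adj_right hma.symm (dist_eq_two_of_adj_of_mem hK
    (not_mem_of_mem_of_dist_eq_two hK hyK hpy) hrK hpr hmK hmr)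
  by_cases hym : y = m
  · exact hym ▸ hm
  · exact hm.of_adj_right (adj_of_mem hK hmK hyK (Ne.symm hym)) hpy

theorem IsFullPair.exists_of_adj (hord : N.hasOrder 2 2) (h : N.IsFullPair p q)
    (hpr : N.graph.Adj p r) : ∃ a, N.IsFullPair r a := by
  obtain ⟨a, ha, har⟩ := h.exists_dist_eq_two hord hpr
  exact ⟨a, ((ha.symm hord.2).of_adj_right hpr har).symm hord.2⟩

end FullPairs

section Grids

variable {d : ℕ} {N : NearPolygon P d} {L M R R' : Set P} {u v u' v' x z : P}

variable (N) in
structure IsGrid (g : Fin 3 → Fin 3 → P) : Prop where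
  injective : ∀ i j k l, g i j = g k l → i = k ∧ j = l
  row_mem : ∀ i, Set.range (g i) ∈ N.Lines
  col_mem : ∀ j, Set.range (g · j) ∈ N.Lines

def gridPoints (g : Fin 3 → Fin 3 → P) : Set P := {w | ∃ i j, g i j = w}

theorem row_subset_gridPoints (g : Fin 3 → Fin 3 → P) (i : Fin 3) :
    Set.range (g i) ⊆ gridPoints g := fun _ ⟨j, hj⟩ => ⟨i, j, hj⟩

theorem col_subset_gridPoints (g : Fin 3 → Fin 3 → P) (j : Fin 3) :
    Set.range (g · j) ⊆ gridPoints g := fun _ ⟨i, hi⟩ => ⟨i, j, hi⟩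

namespace IsGrid

variable {g : Fin 3 → Fin 3 → P} {i j k l : Fin 3}

theorem eq_iff (hg : N.IsGrid g) : g i j = g k l ↔ i = k ∧ j = l :=
  ⟨hg.injective i j k l, by rintro ⟨rfl, rfl⟩; rfl⟩

theorem mem_row_iff (hg : N.IsGrid g) : g k l ∈ Set.range (g i) ↔ k = i :=
  ⟨fun ⟨_, hm⟩ => (hg.eq_iff.1 hm).1.symm, by rintro rfl; exact ⟨l, rfl⟩⟩

theorem mem_col_iff (hg : N.IsGrid g) : g k l ∈ Set.range (g · j) ↔ l = j :=
  ⟨fun ⟨_, hm⟩ => (hg.eq_iff.1 hm).2.symm, by rintro rfl; exact ⟨k, rfl⟩⟩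

theorem adj_row (hg : N.IsGrid g) (hjl : j ≠ l) : N.graph.Adj (g i j) (g i l) :=
  adj_of_mem (hg.row_mem i) ⟨j, rfl⟩ ⟨l, rfl⟩ fun h => hjl (hg.eq_iff.1 h).2

theorem adj_col (hg : N.IsGrid g) (hik : i ≠ k) : N.graph.Adj (g i j) (g k j) :=
  adj_of_mem (hg.col_mem j) ⟨i, rfl⟩ ⟨k, rfl⟩ fun h => hik (hg.eq_iff.1 h).1

theorem adj_iff (hg : N.IsGrid g) :
    N.graph.Adj (g i j) (g k l) ↔ i = k ∧ j ≠ l ∨ i ≠ k ∧ j = l := by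
  refine ⟨fun h => ?_, ?_⟩
  · by_contra hcon
    have hik : i ≠ k := fun hik => hcon (Or.inl ⟨hik, fun hjl => h.ne (by rw [hik, hjl])⟩)
    have hjl : j ≠ l := fun hjl => hcon (Or.inr ⟨hik, hjl⟩)
    obtain ⟨hne, K, hK, hK₁, hK₂⟩ := h
    have hil : g i l ∈ K := mem_of_adj_of_adj hK hK₁ hK₂ hne (hg.adj_row hjl).symm (hg.adj_col hik)
    have hKrow : K = Set.range (g i) := N.unique_line K hK _ (hg.row_mem i) (g i j) (g i l)
      (hg.adj_row hjl).ne hK₁ hil ⟨j, rfl⟩ ⟨l, rfl⟩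
    exact hik (hg.mem_row_iff.1 (hKrow ▸ hK₂)).symm
  · rintro (⟨rfl, hjl⟩ | ⟨hik, rfl⟩)
    exacts [hg.adj_row hjl, hg.adj_col hik]

theorem dist_le_two (hg : N.IsGrid g) : N.graph.dist (g i j) (g k l) ≤ 2 := by
  have h₁ : N.graph.dist (g i j) (g i l) ≤ 1 :=
    dist_le_one_of_mem (hg.row_mem i) ⟨j, rfl⟩ ⟨l, rfl⟩
  have h₂ : N.graph.dist (g i l) (g k l) ≤ 1 :=
    dist_le_one_of_mem (hg.col_mem l) ⟨i, rfl⟩ ⟨k, rfl⟩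
  have := dist_triangle (N := N) (u := g i j) (v := g i l) (w := g k l)
  omega

theorem dist_eq_two_iff (hg : N.IsGrid g) :
    N.graph.dist (g i j) (g k l) = 2 ↔ i ≠ k ∧ j ≠ l := by
  refine ⟨fun h => ⟨?_, ?_⟩, fun ⟨hik, hjl⟩ => ?_⟩
  · rintro rfl
    have : N.graph.dist (g i j) (g i l) ≤ 1 :=
      dist_le_one_of_mem (hg.row_mem i) ⟨j, rfl⟩ ⟨l, rfl⟩
    omega
  · rintro rfl
    have : N.graph.dist (g i j) (g k j) ≤ 1 :=
      dist_le_one_of_mem (hg.col_mem j) ⟨i, rfl⟩ ⟨k, rfl⟩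
    omega
  · exact dist_eq_two_of_not_adj (fun h => hik (hg.eq_iff.1 h).1)
      (by rw [hg.adj_iff]; tauto) hg.dist_le_two

theorem eq_row_or_col (hg : N.IsGrid g) (hL : L ∈ N.Lines) (hu : g i j ∈ L) (hv : g k l ∈ L)
    (hne : g i j ≠ g k l) : L = Set.range (g i) ∨ L = Set.range (g · j) := by
  rcases hg.adj_iff.1 (adj_of_mem hL hu hv hne) with ⟨rfl, -⟩ | ⟨-, rfl⟩
  · exact Or.inl (N.unique_line L hL _ (hg.row_mem i) _ _ hne hu hv ⟨j, rfl⟩ ⟨l, rfl⟩)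
  · exact Or.inr (N.unique_line L hL _ (hg.col_mem j) _ _ hne hu hv ⟨i, rfl⟩ ⟨k, rfl⟩)

theorem gridPoints_subset (hg : N.IsGrid g) {X : Set P} (hX : IsSubspace N.Lines X)
    (h₀₀ : g 0 0 ∈ X) (h₀₁ : g 0 1 ∈ X) (h₁₀ : g 1 0 ∈ X) (h₁₁ : g 1 1 ∈ X) :
    gridPoints g ⊆ X := by
  have hrow : ∀ i, g i 0 ∈ X → g i 1 ∈ X → Set.range (g i) ⊆ X := fun i h₀ h₁ =>
    hX _ (hg.row_mem i) _ ⟨0, rfl⟩ _ ⟨1, rfl⟩ (fun h => by simpa using (hg.eq_iff.1 h).2) h₀ h₁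
  rintro _ ⟨i, j, rfl⟩
  exact hX _ (hg.col_mem j) _ ⟨0, rfl⟩ _ ⟨1, rfl⟩ (fun h => by simpa using (hg.eq_iff.1 h).1)
    (hrow 0 h₀₀ h₀₁ ⟨j, rfl⟩) (hrow 1 h₁₀ h₁₁ ⟨j, rfl⟩) ⟨i, rfl⟩

theorem ncard_dist_eq_two (hg : N.IsGrid g) :
    {w | w ∈ gridPoints g ∧ N.graph.dist (g 0 0) w = 2}.ncard = 4 := by
  have himage : {w | w ∈ gridPoints g ∧ N.graph.dist (g 0 0) w = 2} =
      Function.uncurry g '' {ij | ij.1 ≠ 0 ∧ ij.2 ≠ 0} := by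
    ext w
    constructor
    · rintro ⟨⟨i, j, rfl⟩, h⟩
      obtain ⟨hi, hj⟩ := hg.dist_eq_two_iff.1 h
      exact ⟨(i, j), ⟨Ne.symm hi, Ne.symm hj⟩, rfl⟩
    · rintro ⟨⟨i, j⟩, ⟨hi, hj⟩, rfl⟩
      exact ⟨⟨i, j, rfl⟩, hg.dist_eq_two_iff.2 ⟨Ne.symm hi, Ne.symm hj⟩⟩
  have hinj : Function.Injective (Function.uncurry g) := fun ⟨i, j⟩ ⟨k, l⟩ h => by
    obtain ⟨rfl, rfl⟩ := hg.injective i j k l h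
    rfl
  rw [himage, Set.ncard_image_of_injective _ hinj, Set.ncard_eq_toFinset_card']
  rfl

theorem isSubspace (hg : N.IsGrid g) : IsSubspace N.Lines (gridPoints g) := by
  rintro L hL _ hu _ hv hne ⟨i, j, rfl⟩ ⟨k, l, rfl⟩
  rcases hg.eq_row_or_col hL hu hv hne with rfl | rfl
  exacts [row_subset_gridPoints g i, col_subset_gridPoints g j]

theorem existsUnique_adj (hg : N.IsGrid g) (hu : u ∈ gridPoints g) (hL : L ∈ N.Lines)
    (hLQ : L ⊆ gridPoints g) (huL : u ∉ L) : ∃! y, y ∈ L ∧ N.graph.Adj u y := by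
  obtain ⟨i, j, rfl⟩ := hu
  obtain ⟨a, haL, b, hbL, hab⟩ := N.two_pts L hL
  obtain ⟨k, l, rfl⟩ := hLQ haL
  obtain ⟨k', l', rfl⟩ := hLQ hbL
  obtain ⟨y, hyL, hy⟩ : ∃ y ∈ L, N.graph.Adj (g i j) y := by
    rcases hg.eq_row_or_col hL haL hbL hab with rfl | rfl
    · refine ⟨g k j, ⟨j, rfl⟩, hg.adj_col ?_⟩
      rintro rfl
      exact huL ⟨j, rfl⟩
    · refine ⟨g i l, ⟨i, rfl⟩, hg.adj_row ?_⟩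
      rintro rfl
      exact huL ⟨i, rfl⟩
  exact ⟨y, ⟨hyL, hy⟩, fun y' ⟨hy'L, hy'⟩ => by_contra fun hne =>
    huL (mem_of_adj_of_adj hL hy'L hyL hne hy' hy)⟩

theorem of_mem_lines (hs : ∀ L ∈ N.Lines, L.ncard = 3)
    (hinj : ∀ i j k l, g i j = g k l → i = k ∧ j = l)
    (hrow : ∀ i, ∃ L ∈ N.Lines, ∀ j, g i j ∈ L) (hcol : ∀ j, ∃ L ∈ N.Lines, ∀ i, g i j ∈ L) :
    N.IsGrid g where
  injective := hinj
  row_mem i := by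
    obtain ⟨L, hL, hgL⟩ := hrow i
    rwa [range_eq_of_injective (hs L hL) (fun j l h => (hinj i j i l h).2) hgL]
  col_mem j := by
    obtain ⟨L, hL, hgL⟩ := hcol j
    rwa [range_eq_of_injective (hs L hL) (fun i k h => (hinj i j k j h).1) hgL]

end IsGrid

/-- The third point of `L` is at distance `2` from `u'` and `v'`, hence adjacent to the third
point of `M`. -/
theorem exists_adj_of_adj_of_adj (hs : ∀ L ∈ N.Lines, L.ncard = 3) (hL : L ∈ N.Lines)
    (hM : M ∈ N.Lines) (hu : u ∈ L) (hv : v ∈ L) (huv : u ≠ v) (hu' : u' ∈ M) (hv' : v' ∈ M)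
    (hu'L : u' ∉ L) (hv'L : v' ∉ L) (huu' : N.graph.Adj u u') (hvv' : N.graph.Adj v v') :
    ∃ w ∈ L, ∃ w' ∈ M, w ≠ u ∧ w ≠ v ∧ w' ≠ u' ∧ w' ≠ v' ∧ N.graph.Adj w w' := by
  obtain ⟨w, hwL, hwu, hwv⟩ := exists_third (hs L hL) u v
  obtain ⟨Ku, hKu, huKu, hu'Ku⟩ := huu'.2
  obtain ⟨Kv, hKv, hvKv, hv'Kv⟩ := hvv'.2
  have hwu' : N.graph.dist w u' = 2 := dist_eq_two_of_mem_of_mem hL hKu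
    (fun h => hu'L (h ▸ hu'Ku)) hu huKu hwL hu'Ku hwu fun h => hu'L (h ▸ hu)
  have hwv' : N.graph.dist w v' = 2 := dist_eq_two_of_mem_of_mem hL hKv
    (fun h => hv'L (h ▸ hv'Kv)) hv hvKv hwL hv'Kv hwv fun h => hv'L (h ▸ hv)
  have hu'v' : u' ≠ v' := fun he =>
    hu'L (mem_of_adj_of_adj hL hu hv huv huu'.symm (he ▸ hvv'.symm))
  obtain ⟨w', hw'M, hw'u', hw'v'⟩ := exists_third (hs M hM) u' v'
  exact ⟨w, hwL, w', hw'M, hwu, hwv, hw'u', hw'v',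
    adj_of_dist_eq_two hM (hs M hM) hu' hv' hw'M hu'v' hw'u'.symm hw'v'.symm hwu' hwv'⟩

/-- By `exists_adj_of_adj_of_adj`, the third points of the columns are pairwise adjacent, so they
form a third row. -/
theorem exists_isGrid_of_rows (hs : ∀ L ∈ N.Lines, L.ncard = 3) (hR : R ∈ N.Lines)
    (hR' : R' ∈ N.Lines) (hRR' : Disjoint R R') {h h' : Fin 3 → P} (hh : ∀ j, h j ∈ R)
    (hh' : ∀ j, h' j ∈ R') (hinj : Function.Injective h) (hinj' : Function.Injective h')
    (hadj : ∀ j, N.graph.Adj (h j) (h' j)) : ∃ g, N.IsGrid g ∧ g 0 = h ∧ g 1 = h' := by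
  choose C hC hhC hh'C using fun j => (hadj j).2
  choose c hcC hch hch' using fun j => exists_third (hs _ (hC j)) (h j) (h' j)
  have hh'R : ∀ j, h' j ∉ R := fun j hm => Set.disjoint_left.1 hRR' hm (hh' j)
  have hhR' : ∀ j, h j ∉ R' := fun j hm => Set.disjoint_left.1 hRR' (hh j) hm
  have hCR : ∀ j, (C j ∩ R).Subsingleton := fun j =>
    inter_subsingleton_of_ne (hC j) hR fun he => hh'R j (he ▸ hh'C j)
  have hCR' : ∀ j, (C j ∩ R').Subsingleton := fun j =>
    inter_subsingleton_of_ne (hC j) hR' fun he => hhR' j (he ▸ hhC j)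
  have hcR : ∀ j, c j ∉ R := fun j hm => hch j (hCR j ⟨hcC j, hm⟩ ⟨hhC j, hh j⟩)
  have hcR' : ∀ j, c j ∉ R' := fun j hm => hch' j (hCR' j ⟨hcC j, hm⟩ ⟨hh'C j, hh' j⟩)
  have hcadj : ∀ j l, j ≠ l → N.graph.Adj (c j) (c l) := by
    intro j l hjl
    obtain ⟨w, hwC, w', hw'C, hwh, hwh', hw'h, hw'h', hww'⟩ := exists_adj_of_adj_of_adj hs
      (hC j) (hC l) (hhC j) (hh'C j) (hadj j).ne (hhC l) (hh'C l)
      (fun hm => hjl (hinj (hCR j ⟨hm, hh l⟩ ⟨hhC j, hh j⟩)).symm)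
      (fun hm => hjl (hinj' (hCR' j ⟨hm, hh' l⟩ ⟨hh'C j, hh' j⟩)).symm)
      (adj_of_mem hR (hh j) (hh l) (hinj.ne hjl)) (adj_of_mem hR' (hh' j) (hh' l) (hinj'.ne hjl))
    rwa [eq_of_mem_of_ne (hs _ (hC j)) (hhC j) (hh'C j) (hcC j) (hadj j).ne (hch j).symm
      (hch' j).symm hwC hwh hwh', eq_of_mem_of_ne (hs _ (hC l)) (hhC l) (hh'C l) (hcC l)
      (hadj l).ne (hch l).symm (hch' l).symm hw'C hw'h hw'h'] at hww'
  obtain ⟨-, R'', hR'', hc₀, hc₁⟩ := hcadj 0 1 (by decide)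
  have hc₂ : c 2 ∈ R'' := mem_of_adj_of_adj hR'' hc₀ hc₁ (hcadj 0 1 (by decide)).ne
    (hcadj 2 0 (by decide)) (hcadj 2 1 (by decide))
  have hcinj : Function.Injective c := fun j l hjl => by_contra fun hne => (hcadj j l hne).ne hjl
  refine ⟨![h, h', c], IsGrid.of_mem_lines hs ?_ ?_ ?_, rfl, rfl⟩
  · intro i j k l e
    fin_cases i <;> fin_cases k <;> simp only [Fin.zero_eta, Fin.mk_one, Fin.reduceFinMk,
      Matrix.cons_val_zero, Matrix.cons_val_one, Matrix.cons_val_two, Matrix.head_cons,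
      Matrix.tail_cons] at e
    exacts [⟨rfl, hinj e⟩, (hh'R l (e ▸ hh j)).elim, (hcR l (e ▸ hh j)).elim,
      (hh'R j (e ▸ hh l)).elim, ⟨rfl, hinj' e⟩, (hcR' l (e ▸ hh' j)).elim,
      (hcR j (e ▸ hh l)).elim, (hcR' j (e ▸ hh' l)).elim, ⟨rfl, hcinj e⟩]
  · intro i
    fin_cases i
    exacts [⟨R, hR, hh⟩, ⟨R', hR', hh'⟩,
      ⟨R'', hR'', fun j => by fin_cases j; exacts [hc₀, hc₁, hc₂]⟩]
  · exact fun j => ⟨C j, hC j, fun i => by fin_cases i; exacts [hhC j, hh'C j, hcC j]⟩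

theorem exists_isGrid (hs : ∀ L ∈ N.Lines, L.ncard = 3) (hR : R ∈ N.Lines) (hR' : R' ∈ N.Lines)
    (hRR' : Disjoint R R') (hu : u ∈ R) (hv : v ∈ R) (huv : u ≠ v) (hu' : u' ∈ R')
    (hv' : v' ∈ R') (huu' : N.graph.Adj u u') (hvv' : N.graph.Adj v v') :
    ∃ g, N.IsGrid g ∧ g 0 0 = u ∧ g 0 1 = v ∧ g 1 0 = u' ∧ g 1 1 = v' := by
  have hu'R : u' ∉ R := fun hm => Set.disjoint_left.1 hRR' hm hu'
  have hv'R : v' ∉ R := fun hm => Set.disjoint_left.1 hRR' hm hv'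
  obtain ⟨w, hwR, w', hw'R', hwu, hwv, hw'u', hw'v', hww'⟩ :=
    exists_adj_of_adj_of_adj hs hR hR' hu hv huv hu' hv' hu'R hv'R huu' hvv'
  have hu'v' : u' ≠ v' := by
    rintro rfl
    exact hu'R (mem_of_adj_of_adj hR hu hv huv huu'.symm hvv'.symm)
  obtain ⟨g, hg, h₀, h₁⟩ := exists_isGrid_of_rows hs hR hR' hRR' (h := ![u, v, w])
    (h' := ![u', v', w']) (fun j => by fin_cases j; exacts [hu, hv, hwR])
    (fun j => by fin_cases j; exacts [hu', hv', hw'R']) (injective_vec_three huv hwu.symm hwv.symm)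
    (injective_vec_three hu'v' hw'u'.symm hw'v'.symm)
    (fun j => by fin_cases j; exacts [huu', hvv', hww'])
  exact ⟨g, hg, by simp [h₀], by simp [h₀], by simp [h₁], by simp [h₁]⟩

theorem exists_isGrid_of_nbrLines (hs : ∀ L ∈ N.Lines, L.ncard = 3)
    (hxz : N.graph.dist x z = 2) (h2 : 2 ≤ (N.nbrLines z x).ncard) :
    ∃ g, N.IsGrid g ∧ g 0 0 = x ∧ g 1 1 = z := by
  obtain ⟨Ma, Mb, ⟨hMa, hzMa, a, haMa, hax⟩, ⟨hMb, hzMb, b, hbMb, hbx⟩, hMab⟩ :=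
    (Set.one_lt_ncard_iff (Set.finite_of_ncard_pos (s := N.nbrLines z x) (by omega))).1
      (by omega)
  have hzx : N.graph.dist z x = 2 := by rwa [SimpleGraph.dist_comm]
  have haz : a ≠ z := by rintro rfl; exact not_adj_of_dist_eq_two hzx hax
  have hbz : b ≠ z := by rintro rfl; exact not_adj_of_dist_eq_two hzx hbx
  have hab : a ≠ b := by
    rintro rfl
    exact hMab (N.unique_line Ma hMa Mb hMb a z haz haMa hzMa hbMb hzMb)
  obtain ⟨-, B, hB, hxB, hbB⟩ := hbx.symm
  have hzB : z ∉ B := not_mem_of_mem_of_dist_eq_two hB hxB hzx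
  have haB : a ∉ B := fun haB => hzB (mem_of_adj_of_adj hB haB hbB hab
    (adj_of_mem hMa hzMa haMa haz.symm) (adj_of_mem hMb hzMb hbMb hbz.symm))
  have hxMa : x ∉ Ma := not_mem_of_mem_of_dist_eq_two hMa hzMa hxz
  have hdisj : Disjoint B Ma := Set.disjoint_left.2 fun y hyB hyMa => by
    have hyx : y ≠ x := fun h => hxMa (h ▸ hyMa)
    have hya : y = a := by_contra fun hne => hxMa (mem_of_adj_of_adj hMa hyMa haMa hne
      (adj_of_mem hB hxB hyB hyx.symm) hax.symm)
    exact haB (hya ▸ hyB)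
  obtain ⟨g, hg, h₀₀, -, -, h₁₁⟩ := exists_isGrid hs hB hMa hdisj hxB hbB hbx.ne.symm haMa hzMa
    hax.symm (adj_of_mem hMb hbMb hzMb hbz)
  exact ⟨g, hg, h₀₀, h₁₁⟩

end Grids

section Quads

variable {d : ℕ} {N : NearPolygon P d} {Q : Set P} {p x z : P}

theorem _root_.IsQuad.exists_dist_eq_two (hQ : IsQuad N.Lines Q) (hp : p ∈ Q) :
    ∃ u ∈ Q, N.graph.dist p u = 2 := by
  obtain ⟨L, hL, -, -, hLQ, -, hpL, -, -⟩ := hQ.2.2.2.2.1 p hp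
  obtain ⟨q, hqL, hqp⟩ := exists_mem_ne hL p
  obtain ⟨M₁, hM₁, M₂, hM₂, hM₁Q, hM₂Q, hqM₁, hqM₂, hM₁₂⟩ := hQ.2.2.2.2.1 q (hLQ hqL)
  obtain ⟨M, hM, hMQ, hqM, hML⟩ : ∃ M ∈ N.Lines, M ⊆ Q ∧ q ∈ M ∧ L ≠ M := by
    by_cases h : L = M₁
    · exact ⟨M₂, hM₂, hM₂Q, hqM₂, h ▸ hM₁₂⟩
    · exact ⟨M₁, hM₁, hM₁Q, hqM₁, h⟩
  obtain ⟨u, huM, huq⟩ := exists_mem_ne hM q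
  exact ⟨u, hMQ huM, dist_eq_two_of_mem_of_mem hL hM hML hqL hqM hpL huM hqp.symm huq⟩

theorem _root_.IsQuad.two_le_ncard_nbrLines {s t : ℕ} (hord : N.hasOrder s t)
    (hQ : IsQuad N.Lines Q) (hx : x ∈ Q) (hz : z ∈ Q) (hxz : N.graph.dist x z = 2) :
    2 ≤ (N.nbrLines z x).ncard := by
  obtain ⟨L₁, hL₁, L₂, hL₂, hL₁Q, hL₂Q, hzL₁, hzL₂, hL₁₂⟩ := hQ.2.2.2.2.1 z hz
  have hmem : ∀ L ∈ N.Lines, L ⊆ Q → z ∈ L → L ∈ N.nbrLines z x := fun L hL hLQ hzL =>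
    let ⟨e, ⟨heL, hxe⟩, _⟩ :=
      hQ.2.2.2.1 x hx L hL hLQ (not_mem_of_mem_of_dist_eq_two hL hzL hxz)
    ⟨hL, hzL, e, heL, hxe.symm⟩
  calc 2 = ({L₁, L₂} : Set (Set P)).ncard := (Set.ncard_pair hL₁₂).symm
    _ ≤ _ := Set.ncard_le_ncard (by rintro _ (rfl | rfl) <;> apply hmem <;> assumption)
      (finite_nbrLines hord z x)

end Quads

section Counting

variable {d : ℕ} {N : NearPolygon P d} {L : Set P} {x z : P} {s t : ℕ}

variable (N) in
def sphere (x : P) (i : ℕ) : Set P := {z | N.graph.dist x z = i}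

variable (N) in
noncomputable def lineDist (x : P) (L : Set P) : ℕ := sInf (N.graph.dist x '' L)

variable (N) in
def linesAt (x : P) (i : ℕ) : Set (Set P) := {L | L ∈ N.Lines ∧ N.lineDist x L = i}

theorem lineDist_le (hz : z ∈ L) : N.lineDist x L ≤ N.graph.dist x z :=
  Nat.sInf_le ⟨z, hz, rfl⟩

theorem exists_mem_dist_eq_lineDist (hL : L ∈ N.Lines) (x : P) :
    ∃ n ∈ L, N.graph.dist x n = N.lineDist x L ∧
      ∀ z ∈ L, z ≠ n → N.graph.dist x z = N.lineDist x L + 1 := by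
  obtain ⟨n, hnL, hn⟩ := exists_nearest x hL
  obtain ⟨m, hmL, hm⟩ : N.lineDist x L ∈ N.graph.dist x '' L := Nat.sInf_mem ⟨_, n, hnL, rfl⟩
  have hnm : N.graph.dist x n = N.lineDist x L := by
    refine le_antisymm ?_ (lineDist_le hnL)
    rcases eq_or_ne m n with rfl | hmn
    · exact hm.le
    · have := hn m hmL hmn
      omega
  exact ⟨n, hnL, hnm, fun z hz hzn => hnm ▸ hn z hz hzn⟩

theorem lineDist_eq_zero_iff (hL : L ∈ N.Lines) : N.lineDist x L = 0 ↔ x ∈ L := by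
  refine ⟨fun h => ?_, fun hx => Nat.eq_zero_of_le_zero ?_⟩
  · obtain ⟨n, hnL, hn, -⟩ := exists_mem_dist_eq_lineDist hL x
    exact dist_eq_zero_iff.1 (hn.trans h) ▸ hnL
  · simpa [dist_eq_zero_iff.2 rfl] using lineDist_le (N := N) (x := x) hx

theorem ncard_sphere_inter (hord : N.hasOrder s t) (hL : L ∈ N.Lines) (x : P) (j : ℕ) :
    {z | z ∈ N.sphere x j ∧ z ∈ L}.ncard =
      (if N.lineDist x L = j then 1 else 0) + s * (if N.lineDist x L + 1 = j then 1 else 0) := by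
  obtain ⟨n, hnL, hn, hrest⟩ := exists_mem_dist_eq_lineDist hL x
  simp only [sphere, Set.mem_ofPred_eq]
  by_cases h₀ : N.lineDist x L = j
  · have : {z | N.graph.dist x z = j ∧ z ∈ L} = {n} := by
      ext z
      refine ⟨fun ⟨hz, hzL⟩ => by_contra fun hzn => ?_, by rintro rfl; exact ⟨hn.trans h₀, hnL⟩⟩
      have := hrest z hzL hzn
      omega
    simp [this, h₀]
  by_cases h₁ : N.lineDist x L + 1 = j
  · have : {z | N.graph.dist x z = j ∧ z ∈ L} = L \ {n} := by
      ext z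
      refine ⟨fun ⟨hz, hzL⟩ => ⟨hzL, fun hzn => ?_⟩, fun ⟨hzL, hzn⟩ => ⟨?_, hzL⟩⟩
      · rw [Set.mem_singleton_iff.1 hzn] at hz
        omega
      · exact (hrest z hzL hzn).trans h₁
    rw [this, Set.ncard_sdiff_singleton_of_mem hnL, hord.1 L hL]
    simp [h₀, h₁]
  · have : {z | N.graph.dist x z = j ∧ z ∈ L} = ∅ := by
      ext z
      refine ⟨fun ⟨hz, hzL⟩ => ?_, False.elim⟩
      rcases eq_or_ne z n with rfl | hzn
      · omega
      · have := hrest z hzL hzn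
        omega
    simp [this, h₀, h₁]

theorem ncard_linesAt_zero (hord : N.hasOrder s t) (x : P) : (N.linesAt x 0).ncard = t + 1 := by
  rw [← hord.2 x]
  congr 1
  ext L
  exact and_congr_right lineDist_eq_zero_iff

theorem linesAt_diam_eq_empty (x : P) : N.linesAt x d = ∅ := by
  refine Set.eq_empty_of_forall_notMem fun L ⟨hL, hd⟩ => ?_
  obtain ⟨n, hnL, -, hrest⟩ := exists_mem_dist_eq_lineDist hL x
  obtain ⟨z, hzL, hzn⟩ := exists_mem_ne hL n
  have h₁ := hrest z hzL hzn
  have h₂ : N.graph.dist x z ≤ d := N.diam_le x z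
  omega

theorem card_eq_sum_ncard_sphere [Finite P] (x : P) :
    Nat.card P = ∑ i ∈ Finset.range (d + 1), (N.sphere x i).ncard := by
  classical
  have := Fintype.ofFinite P
  rw [Nat.card_eq_fintype_card, ← Finset.card_univ, Finset.card_eq_sum_card_fiberwise
    (f := N.graph.dist x) fun z _ => Finset.mem_range.2 (Nat.lt_succ_of_le (N.diam_le x z))]
  refine Finset.sum_congr rfl fun i _ => ?_
  rw [← Set.ncard_coe_finset]
  congr 1
  ext z
  simp [sphere]

/-- Double counting the incidences between lines and points at distance `i + 1` from `x`:
each such point is on `t + 1` lines, and a line at distance `j` from `x` has one point at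
distance `j` and `s` points at distance `j + 1`. -/
theorem ncard_sphere_succ [Finite P] (hord : N.hasOrder s t) (x : P) (i : ℕ) :
    (t + 1) * (N.sphere x (i + 1)).ncard =
      (N.linesAt x (i + 1)).ncard + s * (N.linesAt x i).ncard := by
  classical
  have key := Set.sum_ncard_above_eq_sum_ncard_below (fun z L => z ∈ L)
    (N.sphere x (i + 1)).toFinite N.Lines.toFinite
  rw [Finset.sum_const_nat fun z _ => hord.2 z, ← Set.ncard_eq_toFinset_card,
    Finset.sum_congr rfl fun L hL => ncard_sphere_inter hord (Set.Finite.mem_toFinset _ |>.1 hL)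
      x (i + 1), Finset.sum_add_distrib, ← Finset.mul_sum, Set.sum_ite_one_zero_eq_ncard,
    Set.sum_ite_one_zero_eq_ncard] at key
  simp only [add_left_inj] at key
  rw [mul_comm, key]
  rfl

theorem setOf_linesAt_one_eq_nbrLines (hz : N.graph.dist x z = 2) :
    {L | L ∈ N.linesAt x 1 ∧ z ∈ L} = N.nbrLines z x := by
  ext L
  refine ⟨fun ⟨⟨hL, hd⟩, hzL⟩ => ?_, fun ⟨hL, hzL, e, heL, hex⟩ => ⟨⟨hL, ?_⟩, hzL⟩⟩
  · obtain ⟨n, hnL, hn, -⟩ := exists_mem_dist_eq_lineDist hL x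
    exact ⟨hL, hzL, n, hnL, (SimpleGraph.dist_eq_one_iff_adj.1 (hn.trans hd)).symm⟩
  · have h₁ := lineDist_le (N := N) (x := x) heL
    have h₀ : N.lineDist x L ≠ 0 := fun h =>
      not_mem_of_mem_of_dist_eq_two hL hzL hz ((lineDist_eq_zero_iff hL).1 h)
    rw [SimpleGraph.dist_eq_one_iff_adj.2 hex.symm] at h₁
    omega

theorem sum_ncard_nbrLines [Finite P] (hord : N.hasOrder s t) (x : P) :
    ∑ z ∈ (N.sphere x 2).toFinite.toFinset, (N.nbrLines z x).ncard =
      s * (N.linesAt x 1).ncard := by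
  have key := Set.sum_ncard_above_eq_sum_ncard_below (fun z L => z ∈ L)
    (N.sphere x 2).toFinite (N.linesAt x 1).toFinite
  have hz : ∀ z ∈ (N.sphere x 2).toFinite.toFinset,
      {L | L ∈ N.linesAt x 1 ∧ z ∈ L}.ncard = (N.nbrLines z x).ncard := fun z hz => by
    have hz : z ∈ N.sphere x 2 := (Set.Finite.mem_toFinset _).1 hz
    rw [setOf_linesAt_one_eq_nbrLines hz]
  have hL : ∀ L ∈ (N.linesAt x 1).toFinite.toFinset,
      {z | z ∈ N.sphere x 2 ∧ z ∈ L}.ncard = s := fun L hL => by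
    obtain ⟨hL, hd⟩ := (Set.Finite.mem_toFinset _).1 hL
    rw [ncard_sphere_inter hord hL, hd]
    simp
  rw [Finset.sum_congr rfl hz, Finset.sum_const_nat hL, ← Set.ncard_eq_toFinset_card] at key
  rw [key, mul_comm]

theorem ncard_sphere_zero (x : P) : (N.sphere x 0).ncard = 1 := by
  rw [Set.ncard_eq_one]
  exact ⟨x, Set.ext fun z => (dist_eq_zero_iff.trans eq_comm)⟩

theorem ncard_sphere_one [Finite P] (hord : N.hasOrder s t) (x : P) :
    (N.sphere x 1).ncard = s * (t + 1) := by
  have key := Set.ncard_mul_eq_ncard_mul (fun z L => z ∈ L) (N.sphere x 1).toFinite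
    (N.linesAt x 0).toFinite (m := 1) (n := s) (fun z hz => ?_) fun L ⟨hL, hd⟩ => ?_
  · rwa [mul_one, ncard_linesAt_zero hord, mul_comm] at key
  · obtain ⟨hxz, K, hK, hxK, hzK⟩ := SimpleGraph.dist_eq_one_iff_adj.1 (show _ = 1 from hz)
    rw [Set.ncard_eq_one]
    refine ⟨K, Set.ext fun L => ⟨fun ⟨⟨hL, hd⟩, hzL⟩ => ?_, ?_⟩⟩
    · exact N.unique_line L hL K hK x z hxz ((lineDist_eq_zero_iff hL).1 hd) hzL hxK hzK
    · rintro rfl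
      exact ⟨⟨hK, (lineDist_eq_zero_iff hK).2 hxK⟩, hzK⟩
  · rw [ncard_sphere_inter hord hL, hd]
    simp

theorem ncard_linesAt_one [Finite P] (hord : N.hasOrder s t) (x : P) :
    (N.linesAt x 1).ncard = s * t * (t + 1) := by
  have h := ncard_sphere_succ hord x 0
  rw [ncard_sphere_one hord, ncard_linesAt_zero hord] at h
  exact Nat.add_right_cancel (m := s * (t + 1)) (by rw [← h]; ring)

end Counting

section NearHexagon

variable {N : NearPolygon P 3} {Q Q' : Set P} {p q z : P} {g : Fin 3 → Fin 3 → P}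

theorem IsFullPair.dist_le_two (hord : N.hasOrder 2 2) (h : N.IsFullPair p q) (w : P) :
    N.graph.dist p w ≤ 2 := by
  by_contra hw
  obtain ⟨s, hsw, hps⟩ :=
    exists_adj_of_dist_eq_succ (show N.graph.dist p w = 2 + 1 by
      have : N.graph.dist p w ≤ 3 := N.diam_le p w
      omega)
  obtain ⟨-, K, hK, hsK, hwK⟩ := hsw
  obtain ⟨e, heK, hep⟩ := ((h.of_dist_eq_two hord hps).symm hord.2).2 K hK hsK
  by_cases hew : e = w
  · rw [SimpleGraph.dist_eq_one_iff_adj.2 (hew ▸ hep).symm] at hw; omega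
  · exact hw (dist_le_two_of_adj_of_adj hep.symm (adj_of_mem hK heK hwK hew))

/-- Full pairs propagate along edges, so every point would be in one and hence at distance
at most `2` from all points, contradicting the diameter `3`. -/
theorem not_isFullPair (hord : N.hasOrder 2 2) : ¬ N.IsFullPair p q := by
  intro h
  obtain ⟨u, w, huw⟩ := N.diam_eq
  obtain ⟨a, ha⟩ : u ∈ {r | ∃ a, N.IsFullPair r a} :=
    (N.connected p u).mem_of_adj_closed
      (fun _ _ hadj hr => hr.elim fun _ ha => ha.exists_of_adj hord hadj) ⟨q, h⟩
  have huw : N.graph.dist u w = 3 := huw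
  have := ha.dist_le_two hord w
  omega

theorem ncard_nbrLines_le_two (hord : N.hasOrder 2 2) (h : N.graph.dist p q = 2) :
    (N.nbrLines p q).ncard ≤ 2 := by
  by_contra! h3
  have heq : N.nbrLines p q = {L | L ∈ N.Lines ∧ p ∈ L} :=
    Set.eq_of_subset_of_ncard_le (fun L hL => ⟨hL.1, hL.2.1⟩) (by rw [hord.2 p]; omega)
      (Set.finite_of_ncard_ne_zero (by rw [hord.2 p]; omega))
  exact not_isFullPair hord ⟨h, fun L hL hpL => (heq ▸ ⟨hL, hpL⟩ : L ∈ N.nbrLines p q).2.2⟩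

theorem eq_or_eq_of_mem_nbrLines (hord : N.hasOrder 2 2) (h : N.graph.dist p q = 2)
    {L₁ L₂ L₃ : Set P} (h₁ : L₁ ∈ N.nbrLines p q) (h₂ : L₂ ∈ N.nbrLines p q)
    (h₃ : L₃ ∈ N.nbrLines p q) : L₁ = L₂ ∨ L₁ = L₃ ∨ L₂ = L₃ := by
  by_contra! hne
  have := (Set.two_lt_ncard_iff (finite_nbrLines hord p q)).2 ⟨L₁, L₂, L₃, h₁, h₂, h₃, hne⟩
  have := ncard_nbrLines_le_two hord h
  omega

/-- Otherwise the three lines through `g k l` towards `g i j` would be its row, its column and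
the line through `z`. -/
theorem IsGrid.mem_of_adj_of_adj (hord : N.hasOrder 2 2) (hg : N.IsGrid g) {i j k l : Fin 3}
    (hd : N.graph.dist (g i j) (g k l) = 2) (hz₁ : N.graph.Adj z (g i j))
    (hz₂ : N.graph.Adj z (g k l)) : z ∈ gridPoints g := by
  obtain ⟨hik, hjl⟩ := hg.dist_eq_two_iff.1 hd
  obtain ⟨-, K, hK, hzK, hvK⟩ := hz₂
  rcases eq_or_eq_of_mem_nbrLines hord (by rwa [SimpleGraph.dist_comm])
    ⟨hg.row_mem k, ⟨l, rfl⟩, g k j, ⟨j, rfl⟩, hg.adj_col (Ne.symm hik)⟩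
    ⟨hg.col_mem l, ⟨k, rfl⟩, g i l, ⟨i, rfl⟩, hg.adj_row (Ne.symm hjl)⟩
    ⟨hK, hvK, z, hzK, hz₁⟩ with h | h | h
  · exact absurd (hg.mem_col_iff.1 (h ▸ ⟨j, rfl⟩ : g k j ∈ Set.range (g · l))) hjl
  · exact row_subset_gridPoints g k (h ▸ hzK)
  · exact col_subset_gridPoints g l (h ▸ hzK)

theorem IsGrid.isQuad (hord : N.hasOrder 2 2) (hg : N.IsGrid g) :
    IsQuad N.Lines (gridPoints g) := by
  have hd : N.graph.dist (g 0 0) (g 1 1) = 2 := hg.dist_eq_two_iff.2 ⟨by decide, by decide⟩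
  refine ⟨⟨hg.isSubspace, ?_⟩, fun _ ⟨i, j, hu⟩ _ ⟨k, l, hv⟩ => hu ▸ hv ▸ hg.dist_le_two,
    ⟨_, ⟨0, 0, rfl⟩, _, ⟨1, 1, rfl⟩, hd⟩, fun u hu L hL => hg.existsUnique_adj hu hL, ?_,
    ⟨_, ⟨0, 0, rfl⟩, _, ⟨1, 1, rfl⟩, ne_of_dist_eq_two hd, not_adj_of_dist_eq_two hd⟩⟩
  · rintro _ ⟨i, j, rfl⟩ _ ⟨k, l, rfl⟩ z hz
    have hz : N.graph.dist (g i j) z + N.graph.dist z (g k l) =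
      N.graph.dist (g i j) (g k l) := hz
    have hle : N.graph.dist (g i j) (g k l) ≤ 2 := hg.dist_le_two
    by_cases hz₁ : N.graph.dist (g i j) z = 0
    · exact dist_eq_zero_iff.1 hz₁ ▸ ⟨i, j, rfl⟩
    by_cases hz₂ : N.graph.dist z (g k l) = 0
    · exact (dist_eq_zero_iff.1 hz₂).symm ▸ ⟨k, l, rfl⟩
    have h₁ : N.graph.Adj (g i j) z := SimpleGraph.dist_eq_one_iff_adj.1 (by omega)
    have h₂ : N.graph.Adj z (g k l) := SimpleGraph.dist_eq_one_iff_adj.1 (by omega)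
    exact hg.mem_of_adj_of_adj hord (by omega) h₁.symm h₂
  · rintro _ ⟨i, j, rfl⟩
    obtain ⟨l, hl⟩ := exists_ne j
    refine ⟨_, hg.row_mem i, _, hg.col_mem j, row_subset_gridPoints g i,
      col_subset_gridPoints g j, ⟨j, rfl⟩, ⟨i, rfl⟩, fun h => ?_⟩
    exact hl (hg.mem_col_iff.1 (h ▸ ⟨l, rfl⟩ : g i l ∈ Set.range (g · j)))

/-- A quad has only two lines through each of its points (its order is `(2, 1)`), so a quad
containing another one adds no points to it. -/
theorem _root_.IsQuad.eq_of_subset (hord : N.hasOrder 2 2) (hQ : IsQuad N.Lines Q)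
    (hQ' : IsQuad N.Lines Q') (hsub : Q ⊆ Q') : Q = Q' := by
  have hadj : ∀ w ∈ Q, ∀ y ∈ Q', N.graph.Adj w y → y ∈ Q := by
    intro w hw y hy ⟨hne, K, hK, hwK, hyK⟩
    have hKQ' : K ⊆ Q' := hQ'.1.1 K hK w hwK y hyK hne (hsub hw) hy
    obtain ⟨L₁, hL₁, L₂, hL₂, hL₁Q, hL₂Q, hwL₁, hwL₂, hL₁₂⟩ := hQ.2.2.2.2.1 w hw
    obtain ⟨u, huQ, hwu⟩ := hQ.exists_dist_eq_two hw
    have huw : N.graph.dist u w = 2 := by rwa [SimpleGraph.dist_comm]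
    have hmem : ∀ L ∈ N.Lines, L ⊆ Q' → w ∈ L → L ∈ N.nbrLines w u := fun L hL hLQ' hwL =>
      let ⟨e, ⟨heL, hue⟩, _⟩ :=
        hQ'.2.2.2.1 u (hsub huQ) L hL hLQ' (not_mem_of_mem_of_dist_eq_two hL hwL huw)
      ⟨hL, hwL, e, heL, hue.symm⟩
    rcases eq_or_eq_of_mem_nbrLines hord hwu (hmem L₁ hL₁ (hL₁Q.trans hsub) hwL₁)
      (hmem L₂ hL₂ (hL₂Q.trans hsub) hwL₂) (hmem K hK hKQ' hwK) with h | h | h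
    · exact absurd h hL₁₂
    · exact hL₁Q (h ▸ hyK)
    · exact hL₂Q (h ▸ hyK)
  refine Set.Subset.antisymm hsub fun z hz => ?_
  obtain ⟨x, hx, -⟩ := hQ.2.2.1
  have hle : N.graph.dist x z ≤ 2 := hQ'.2.1 x (hsub hx) z hz
  rcases (show N.graph.dist x z = 0 ∨ N.graph.dist x z = 1 + 1 ∨ N.graph.dist x z = 1 by omega)
    with h | h | h
  · exact dist_eq_zero_iff.1 h ▸ hx
  · obtain ⟨y, hyz, hxy⟩ := exists_adj_of_dist_eq_succ h
    have hyQ' : y ∈ Q' := hQ'.1.2 x (hsub hx) z hz y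
      (by rw [hxy, SimpleGraph.dist_eq_one_iff_adj.2 hyz, h])
    exact hadj y (hadj x hx y hyQ' (SimpleGraph.dist_eq_one_iff_adj.1 hxy)) z hz hyz
  · exact hadj x hx z hz (SimpleGraph.dist_eq_one_iff_adj.1 h)

theorem IsGrid.eq_gridPoints (hord : N.hasOrder 2 2) (hg : N.IsGrid g) (hQ : IsQuad N.Lines Q)
    (h₀₀ : g 0 0 ∈ Q) (h₁₁ : g 1 1 ∈ Q) : Q = gridPoints g := by
  have hd : N.graph.dist (g 0 0) (g 1 1) = 2 := hg.dist_eq_two_iff.2 ⟨by decide, by decide⟩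
  have hmid : ∀ i j, N.graph.Adj (g 0 0) (g i j) → N.graph.Adj (g i j) (g 1 1) → g i j ∈ Q :=
    fun i j h₁ h₂ => hQ.1.2 _ h₀₀ _ h₁₁ _ (by
      rw [SimpleGraph.dist_eq_one_iff_adj.2 h₁, SimpleGraph.dist_eq_one_iff_adj.2 h₂, hd])
  have h₀₁ := hmid 0 1 (hg.adj_row (by decide)) (hg.adj_col (by decide))
  have h₁₀ := hmid 1 0 (hg.adj_col (by decide)) (hg.adj_row (by decide))
  exact ((hg.isQuad hord).eq_of_subset hord hQ (hg.gridPoints_subset hQ.1.1 h₀₀ h₀₁ h₁₀ h₁₁)).symm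

theorem card_add_nine_eq_three_mul [Finite P] (hord : N.hasOrder 2 2) (x : P) :
    Nat.card P + 9 = 3 * (N.sphere x 2).ncard := by
  have hv := card_eq_sum_ncard_sphere (N := N) x
  simp only [Finset.sum_range_succ, Finset.sum_range_zero, ncard_sphere_zero,
    ncard_sphere_one hord] at hv
  have h₂ : 3 * (N.sphere x 2).ncard = (N.linesAt x 2).ncard + 2 * (N.linesAt x 1).ncard :=
    ncard_sphere_succ hord x 1
  have h₃ : 3 * (N.sphere x 3).ncard = (N.linesAt x 3).ncard + 2 * (N.linesAt x 2).ncard :=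
    ncard_sphere_succ hord x 2
  rw [ncard_linesAt_one hord] at h₂
  rw [linesAt_diam_eq_empty, Set.ncard_empty] at h₃
  omega

/-- Each of the `12` lines at distance `1` from `x` has two points at distance `2` from `x`, and
each of these points is on one or two such lines. -/
theorem ncard_sphere_two_add_ncard_eq [Finite P] (hord : N.hasOrder 2 2) (x : P) :
    (N.sphere x 2).ncard + {z | z ∈ N.sphere x 2 ∧ (N.nbrLines z x).ncard = 2}.ncard = 24 := by
  classical
  have key : ∑ z ∈ (N.sphere x 2).toFinite.toFinset, (N.nbrLines z x).ncard = 24 := by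
    rw [sum_ncard_nbrLines hord x, ncard_linesAt_one hord]
  rw [Set.ncard_eq_toFinset_card _ (N.sphere x 2).toFinite,
    ← Set.sum_ite_one_zero_eq_ncard (N.sphere x 2).toFinite, Finset.card_eq_sum_ones,
    ← Finset.sum_add_distrib, ← key]
  refine Finset.sum_congr rfl fun z hz => ?_
  have hz : z ∈ N.sphere x 2 := (Set.Finite.mem_toFinset _).1 hz
  have h₁ := one_le_ncard_nbrLines hord hz
  have h₂ := ncard_nbrLines_le_two hord (by rwa [SimpleGraph.dist_comm] : N.graph.dist z x = 2)
  split_ifs <;> omega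

/-- A point `z` at distance `2` from `x` on two lines towards `x` lies in exactly one quad
through `x` (the grid they span), and a quad through `x` contains four such points. -/
theorem ncard_setOf_ncard_nbrLines_eq_two [Finite P] (hord : N.hasOrder 2 2) (x : P) :
    {z | z ∈ N.sphere x 2 ∧ (N.nbrLines z x).ncard = 2}.ncard =
      4 * {Q : Set P | IsQuad N.Lines Q ∧ x ∈ Q}.ncard := by
  have key := Set.ncard_mul_eq_ncard_mul (fun z Q => z ∈ Q)
    (Set.toFinite {z | z ∈ N.sphere x 2 ∧ (N.nbrLines z x).ncard = 2})
    (Set.toFinite {Q : Set P | IsQuad N.Lines Q ∧ x ∈ Q}) (m := 1) (n := 4) ?_ ?_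
  · rw [← mul_one (Set.ncard _), key, mul_comm]
  · rintro z ⟨hz, hμ⟩
    obtain ⟨g, hg, h₀₀, h₁₁⟩ := exists_isGrid_of_nbrLines hord.1 hz hμ.ge
    rw [Set.ncard_eq_one]
    refine ⟨gridPoints g, Set.ext fun Q => ⟨fun ⟨⟨hQ, hxQ⟩, hzQ⟩ => ?_, ?_⟩⟩
    · exact hg.eq_gridPoints hord hQ (h₀₀ ▸ hxQ) (h₁₁ ▸ hzQ)
    · rintro rfl
      exact ⟨⟨hg.isQuad hord, 0, 0, h₀₀⟩, 1, 1, h₁₁⟩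
  · rintro Q ⟨hQ, hxQ⟩
    have hμ : ∀ w ∈ Q, N.graph.dist x w = 2 → (N.nbrLines w x).ncard = 2 := fun w hw hd =>
      le_antisymm (ncard_nbrLines_le_two hord (by rwa [SimpleGraph.dist_comm]))
        (hQ.two_le_ncard_nbrLines hord hxQ hw hd)
    obtain ⟨z, hzQ, hz⟩ := hQ.exists_dist_eq_two hxQ
    obtain ⟨g, hg, h₀₀, h₁₁⟩ := exists_isGrid_of_nbrLines hord.1 hz (hμ z hzQ hz).ge
    have hQg := hg.eq_gridPoints hord hQ (h₀₀ ▸ hxQ) (h₁₁ ▸ hzQ)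
    rw [← hg.ncard_dist_eq_two, h₀₀, ← hQg]
    congr 1
    ext w
    exact ⟨fun ⟨⟨hd, _⟩, hwQ⟩ => ⟨hwQ, hd⟩, fun ⟨hwQ, hd⟩ => ⟨⟨hd, hμ w hwQ hd⟩, hwQ⟩⟩

end NearHexagon

end NearPolygon

/-- Let `N` be a near hexagon of order `(2,2)` with `v` points
in total.  Then for every point `x` the number of quads of `N` containing `x`
equals `(63 - v)/12`; in particular `12` divides `63 - v`. -/
theorem near_hexagon_quad_count {P : Type*} (N : NearPolygon P 3)
    (hord : N.hasOrder 2 2) (x : P) :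
    12 * {Q : Set P | IsQuad N.Lines Q ∧ x ∈ Q}.ncard + Nat.card P = 63 ∧
      12 ∣ 63 - Nat.card P := by
  have := N.finite_of_hasOrder hord
  have hv := N.card_add_nine_eq_three_mul hord x
  have hμ := N.ncard_sphere_two_add_ncard_eq hord x
  have hq := N.ncard_setOf_ncard_nbrLines_eq_two hord x
  exact ⟨by omega, ⟨{Q : Set P | IsQuad N.Lines Q ∧ x ∈ Q}.ncard, by omega⟩⟩
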